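/- Let ε ∈ (0,1), n ≥ 3. Let R be the n-dimensional rectangle with sides R₁ = ⋯ = R_{n−2} = ε and R_{n−1} = R_n = 1, and let S be the rectangle with sides S₁ = ⋯ = S_{n−1} = ε and S_n = ε^{−1}. Then every linear diffeomorphism from R onto S has (n−1)-dilation at least ε^{−1}. -/

import Mathlib

/-!
A linear map taking the box `R` onto the box `S` maps the nonnegative orthant onto itself, so
both its matrix and the matrix of its inverse are nonnegative; such a map is a scaled permutation
of the coordinate axes, `eᵢ ↦ (S_{σ i} / Rᵢ) e_{σ i}`. Since `R` and `S` both have volume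
`ε^(n-2)`, `|det L| = 1`, i.e. the product of all singular values is `1`. One of the two unit
sides of `R` is sent to a side of length `ε`, so the smallest singular value is at most `ε`, and
the product of the other `n - 1` is at least `ε⁻¹`.
-/

open MeasureTheory

section SingularValues

variable {ι E F : Type*} [Fintype ι] [NormedAddCommGroup E] [InnerProductSpace ℝ E]
  [NormedAddCommGroup F] [InnerProductSpace ℝ F] {s : ι → ℝ}

theorem Orthonormal.exists_orthonormalBasis_coe_eq [FiniteDimensional ℝ E] {v : ι → E}
    (hv : Orthonormal ℝ v) (hcard : Fintype.card ι = Module.finrank ℝ E) :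
    ∃ b : OrthonormalBasis ι ℝ E, ⇑b = v :=
  ⟨(basisOfLinearIndependentOfCardEqFinrank' v hv.linearIndependent hcard).toOrthonormalBasis
    (by simpa using hv), by simp⟩

theorem LinearMap.abs_det_eq_prod_of_svd [DecidableEq ι] {L : E →ₗ[ℝ] E}
    (v w : OrthonormalBasis ι ℝ E) (hs : ∀ i, 0 ≤ s i) (hsvd : ∀ i, L (v i) = s i • w i) :
    |LinearMap.det L| = ∏ i, s i := by
  have hdiag : LinearMap.toMatrix v.toBasis w.toBasis L = Matrix.diagonal s := by
    ext i j
    by_cases h : i = j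
    · subst h; simp [LinearMap.toMatrix_apply, hsvd]
    · simp [LinearMap.toMatrix_apply, hsvd, Matrix.diagonal_apply_ne _ h, Ne.symm h]
  have := v.toBasis.finiteDimensional_of_finite
  rw [← Real.norm_eq_abs, ← LinearMap.normDet_eq_norm_det, L.normDet_eq_norm_det_toMatrix v w,
    hdiag, Matrix.det_diagonal, Real.norm_eq_abs,
    abs_of_nonneg (Finset.prod_nonneg fun i _ => hs i)]

theorem LinearMap.mul_norm_le_norm_apply_of_svd {L : E →ₗ[ℝ] F} (v : OrthonormalBasis ι ℝ E)
    {w : ι → F} (hw : Orthonormal ℝ w) (hs : ∀ i, 0 ≤ s i) (hsvd : ∀ i, L (v i) = s i • w i)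
    {i₀ : ι} (hmin : ∀ i, s i₀ ≤ s i) (x : E) :
    s i₀ * ‖x‖ ≤ ‖L x‖ := by
  have hLx : L x = ∑ i, (inner ℝ (v i) x * s i) • w i := by
    conv_lhs => rw [← v.sum_repr' x]
    simp [map_sum, hsvd, smul_smul]
  have hnorm : ‖L x‖ ^ 2 = ∑ i, (inner ℝ (v i) x * s i) ^ 2 := by
    rw [hLx, ← real_inner_self_eq_norm_sq, hw.inner_sum]
    simp [sq]
  rw [← pow_le_pow_iff_left₀ (mul_nonneg (hs i₀) (norm_nonneg x)) (norm_nonneg _) two_ne_zero,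
    mul_pow, ← v.sum_sq_norm_inner_right, hnorm, Finset.mul_sum]
  refine Finset.sum_le_sum fun i _ => ?_
  rw [Real.norm_eq_abs, sq_abs, mul_pow, mul_comm]
  gcongr
  · exact hs i₀
  · exact hmin i

end SingularValues

section Box

variable {ι : Type*} {r s : ι → ℝ}

def box (r : ι → ℝ) : Set (EuclideanSpace ℝ ι) := {x | ∀ i, x i ∈ Set.Icc 0 (r i)}

section DecidableEq

variable [DecidableEq ι]

theorem smul_single_mem_box_iff (hr : ∀ i, 0 ≤ r i) (c : ℝ) (i : ι) :
    c • EuclideanSpace.single i (1 : ℝ) ∈ box r ↔ c ∈ Set.Icc 0 (r i) := by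
  refine ⟨fun h => by simpa using h i, fun h j => ?_⟩
  by_cases hj : j = i
  · subst hj; simpa using h
  · simp [hj, hr j]

theorem LinearMap.apply_single_nonneg_of_mapsTo_box
    {L : EuclideanSpace ℝ ι →ₗ[ℝ] EuclideanSpace ℝ ι} (hr : ∀ i, 0 < r i)
    (h : Set.MapsTo L (box r) (box s)) (i j : ι) :
    0 ≤ L (EuclideanSpace.single i (1 : ℝ)) j := by
  have := (h ((smul_single_mem_box_iff (fun i => (hr i).le) _ i).mpr ⟨(hr i).le, le_rfl⟩) j).1
  rw [map_smul, PiLp.smul_apply, smul_eq_mul] at this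
  exact nonneg_of_mul_nonneg_right this (hr i)

theorem LinearMap.mul_le_of_mapsTo_box {L : EuclideanSpace ℝ ι →ₗ[ℝ] EuclideanSpace ℝ ι}
    (hr : ∀ i, 0 ≤ r i) (h : Set.MapsTo L (box r) (box s)) {i j : ι} {c : ℝ}
    (hL : L (EuclideanSpace.single i 1) = c • EuclideanSpace.single j 1) :
    r i * c ≤ s j := by
  have := (h ((smul_single_mem_box_iff hr _ i).mpr ⟨hr i, le_rfl⟩) j).2
  simpa [hL, smul_smul] using this

end DecidableEq

variable [Fintype ι]

theorem volume_box (hr : ∀ i, 0 ≤ r i) : volume (box r) = ENNReal.ofReal (∏ i, r i) := by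
  have : box r = WithLp.ofLp ⁻¹' Set.Icc 0 r := by
    ext x; simp [box, Pi.le_def, forall_and]
  rw [this, (PiLp.volume_preserving_ofLp ι).measure_preimage measurableSet_Icc.nullMeasurableSet,
    Real.volume_Icc_pi, ENNReal.ofReal_prod_of_nonneg fun i _ => hr i]
  simp

theorem LinearMap.abs_det_mul_prod_eq_prod_of_image_box (hr : ∀ i, 0 ≤ r i)
    (hs : ∀ i, 0 ≤ s i) {L : EuclideanSpace ℝ ι →ₗ[ℝ] EuclideanSpace ℝ ι}
    (h : L '' box r = box s) :
    |LinearMap.det L| * ∏ i, r i = ∏ i, s i := by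
  have hvol := Measure.addHaar_image_linearMap volume L (box r)
  rw [h, volume_box hr, volume_box hs, ← ENNReal.ofReal_mul (abs_nonneg _)] at hvol
  exact ((ENNReal.ofReal_eq_ofReal_iff (Finset.prod_nonneg fun i _ => hs i)
    (mul_nonneg (abs_nonneg _) (Finset.prod_nonneg fun i _ => hr i))).mp hvol).symm

variable [DecidableEq ι]

theorem EuclideanSpace.sum_smul_single (x : EuclideanSpace ℝ ι) :
    ∑ m, x m • EuclideanSpace.single m (1 : ℝ) = x := by
  simpa using (EuclideanSpace.basisFun ι ℝ).sum_repr x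

theorem LinearEquiv.exists_apply_single_eq_smul_single_of_nonneg
    (L : EuclideanSpace ℝ ι ≃ₗ[ℝ] EuclideanSpace ℝ ι)
    (hL : ∀ i j, 0 ≤ L (EuclideanSpace.single i (1 : ℝ)) j)
    (hL' : ∀ i j, 0 ≤ L.symm (EuclideanSpace.single i (1 : ℝ)) j) (i : ι) :
    ∃ j, ∃ c : ℝ, L (EuclideanSpace.single i 1) = c • EuclideanSpace.single j 1 := by
  set a := L (EuclideanSpace.single i (1 : ℝ))
  obtain ⟨j, hj⟩ : ∃ j, a j ≠ 0 := by
    by_contra! h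
    have : a = 0 := by ext k; simpa using h k
    simpa using L.injective (this.trans (map_zero L).symm)
  -- Expanding `eᵢ = L⁻¹ a` over the nonnegative columns of `L⁻¹` forces `L⁻¹ eⱼ` onto the
  -- line of `eᵢ`; then `eⱼ` is a multiple of `a`.
  set b := L.symm (EuclideanSpace.single j (1 : ℝ))
  have hb : b = b i • EuclideanSpace.single i 1 := by
    ext k
    by_cases hk : k = i
    · subst hk; simp
    have hexp : EuclideanSpace.single i (1 : ℝ) =
        ∑ m, a m • L.symm (EuclideanSpace.single m 1) := by
      calc EuclideanSpace.single i (1 : ℝ) = L.symm a := (L.symm_apply_apply _).symm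
        _ = _ := by
          conv_lhs => rw [← EuclideanSpace.sum_smul_single a]
          simp only [map_sum, map_smul]
    have hsum : ∑ m, a m * L.symm (EuclideanSpace.single m 1) k = 0 := by
      simpa [hk] using congrArg (· k) hexp.symm
    have := (Finset.sum_eq_zero_iff_of_nonneg fun m _ => mul_nonneg (hL i m) (hL' m k)).mp
      hsum j (Finset.mem_univ j)
    simpa [hk] using (mul_eq_zero.mp this).resolve_left hj
  refine ⟨j, (b i)⁻¹, ?_⟩
  have hej : EuclideanSpace.single j (1 : ℝ) = b i • a := by
    rw [← map_smul, ← hb, L.apply_symm_apply]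
  have hbi : b i ≠ 0 := by
    rintro h0
    simpa [h0] using congrArg (· j) hej
  rw [hej, smul_smul, inv_mul_cancel₀ hbi, one_smul]

theorem LinearEquiv.exists_perm_apply_single_eq_of_image_box
    (L : EuclideanSpace ℝ ι ≃ₗ[ℝ] EuclideanSpace ℝ ι) (hr : ∀ i, 0 < r i) (hs : ∀ i, 0 < s i)
    (h : L '' box r = box s) :
    ∃ σ : Equiv.Perm ι, ∀ i,
      L (EuclideanSpace.single i 1) = (s (σ i) / r i) • EuclideanSpace.single (σ i) 1 := by
  have hmaps : Set.MapsTo L (box r) (box s) := h ▸ Set.mapsTo_image L _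
  have hmaps' : Set.MapsTo L.symm (box s) (box r) := by
    rw [← h]; rintro _ ⟨x, hx, rfl⟩; simpa using hx
  choose σ c hσ using L.exists_apply_single_eq_smul_single_of_nonneg
    (LinearMap.apply_single_nonneg_of_mapsTo_box (L := L.toLinearMap) hr hmaps)
    (LinearMap.apply_single_nonneg_of_mapsTo_box (L := L.symm.toLinearMap) hs hmaps')
  have hc : ∀ i, c i ≠ 0 := by
    intro i h0
    have : EuclideanSpace.single i (1 : ℝ) = 0 :=
      L.injective (by rw [hσ, h0, zero_smul, map_zero])
    simpa using congrArg (· i) this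
  have hσinj : Function.Injective σ := by
    intro i i' hii'
    have := L.injective (show L (c i' • EuclideanSpace.single i 1) =
      L (c i • EuclideanSpace.single i' 1) by simp [hσ, hii', smul_smul, mul_comm])
    by_contra hne
    simpa [hne, hc i'] using congrArg (· i) this
  refine ⟨Equiv.ofBijective σ hσinj.bijective_of_finite, fun i => ?_⟩
  have hsymm : L.symm (EuclideanSpace.single (σ i) 1) = (c i)⁻¹ • EuclideanSpace.single i 1 := by
    rw [L.symm_apply_eq, map_smul, hσ, smul_smul, inv_mul_cancel₀ (hc i), one_smul]
  have hle := LinearMap.mul_le_of_mapsTo_box (L := L.toLinearMap) (fun i => (hr i).le) hmaps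
    (hσ i)
  have hge := LinearMap.mul_le_of_mapsTo_box (L := L.symm.toLinearMap) (fun i => (hs i).le)
    hmaps' hsymm
  have hcpos : 0 < c i := by
    have := LinearMap.apply_single_nonneg_of_mapsTo_box (L := L.toLinearMap) hr hmaps i (σ i)
    simp only [LinearEquiv.coe_coe, hσ, PiLp.smul_apply, PiLp.single_apply, if_pos, smul_eq_mul,
      mul_one] at this
    exact this.lt_of_ne' (hc i)
  have hge' : s (σ i) ≤ r i * c i := (div_le_iff₀ hcpos).mp (by rwa [div_eq_mul_inv])
  have hci : c i = s (σ i) / r i := by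
    rw [eq_div_iff (hr i).ne', mul_comm]
    exact le_antisymm hle hge'
  rw [hσ i, hci]
  rfl

end Box

theorem Fin.prod_ite_val_lt {M : Type*} [CommMonoid M] {n m : ℕ} (hm : m ≤ n) (a b : M) :
    ∏ i : Fin n, (if (i : ℕ) < m then a else b) = a ^ m * b ^ (n - m) := by
  rw [Fin.prod_univ_eq_prod_range (fun i => if i < m then a else b),
    ← Finset.prod_range_mul_prod_Ico _ hm,
    Finset.prod_congr rfl fun i hi => if_pos (Finset.mem_range.mp hi),
    Finset.prod_congr rfl fun i hi => if_neg (Finset.mem_Ico.mp hi).1.not_gt]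
  simp

theorem Fin.mul_prod_filter_one_le {M : Type*} [CommMonoid M] {n : ℕ} (hn : 0 < n)
    (f : Fin n → M) :
    f ⟨0, hn⟩ * ∏ j ∈ Finset.univ.filter (fun j : Fin n => 1 ≤ (j : ℕ)), f j = ∏ j, f j := by
  rw [← Finset.mul_prod_erase Finset.univ f (Finset.mem_univ ⟨0, hn⟩)]
  congr 2
  ext j
  simp [Fin.ext_iff, Nat.one_le_iff_ne_zero]

theorem Equiv.Perm.exists_sub_two_le_val_and_val_apply_lt {n : ℕ} (hn : 2 ≤ n)
    (σ : Equiv.Perm (Fin n)) : ∃ i : Fin n, n - 2 ≤ (i : ℕ) ∧ (σ i : ℕ) < n - 1 := by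
  by_contra! h
  have hlast : ∀ i : Fin n, n - 2 ≤ (i : ℕ) → (σ i : ℕ) = n - 1 := fun i hi =>
    le_antisymm (by omega) (h i hi)
  have := σ.injective (Fin.ext ((hlast ⟨n - 2, by omega⟩ le_rfl).trans
    (hlast ⟨n - 1, by omega⟩ (by simp; omega)).symm))
  simp [Fin.ext_iff] at this
  omega

/-- For `R` with sides `ε, …, ε, 1, 1` and `S` with sides `ε, …, ε, ε⁻¹` in dimension
`n ≥ 3`, every linear diffeomorphism taking `R` onto `S` has `(n-1)`-dilation (the
product of its `n-1` largest singular values, given here by an SVD) at least `ε⁻¹`. -/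
theorem width_volume_stmt8 {n : ℕ} (hn : 3 ≤ n) (ε : ℝ) (hε : ε ∈ Set.Ioo (0:ℝ) 1)
    (Rs Ss : Fin n → ℝ)
    (hRs : ∀ i : Fin n, Rs i = if (i : ℕ) < n - 2 then ε else 1)
    (hSs : ∀ i : Fin n, Ss i = if (i : ℕ) < n - 1 then ε else ε⁻¹)
    (L : EuclideanSpace ℝ (Fin n) ≃ₗ[ℝ] EuclideanSpace ℝ (Fin n))
    (hL : L '' {x : EuclideanSpace ℝ (Fin n) | ∀ i, x i ∈ Set.Icc 0 (Rs i)} =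
        {x : EuclideanSpace ℝ (Fin n) | ∀ i, x i ∈ Set.Icc 0 (Ss i)})
    (s : Fin n → ℝ) (hs0 : ∀ i, 0 ≤ s i) (hsmono : Monotone s)
    (v w : Fin n → EuclideanSpace ℝ (Fin n)) (hv : Orthonormal ℝ v) (hw : Orthonormal ℝ w)
    (hsvd : ∀ i, L (v i) = s i • w i) :
    ε⁻¹ ≤ ∏ j ∈ Finset.univ.filter (fun j : Fin n => 1 ≤ (j : ℕ)), s j := by
  obtain ⟨hε0, -⟩ := hε
  have hRpos : ∀ i, 0 < Rs i := fun i => by rw [hRs]; split_ifs <;> positivity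
  have hSpos : ∀ i, 0 < Ss i := fun i => by rw [hSs]; split_ifs <;> positivity
  have hvol : ∏ i, Rs i = ∏ i, Ss i := by
    rw [Finset.prod_congr rfl fun i _ => hRs i, Finset.prod_congr rfl fun i _ => hSs i,
      Fin.prod_ite_val_lt (by omega), Fin.prod_ite_val_lt (by omega),
      show n - (n - 1) = 1 by omega, show n - 1 = n - 2 + 1 by omega, one_pow, pow_one, pow_succ,
      mul_one, mul_assoc, mul_inv_cancel₀ hε0.ne', mul_one]
  have hdet : |LinearMap.det (L : EuclideanSpace ℝ (Fin n) →ₗ[ℝ] _)| = 1 := by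
    have := LinearMap.abs_det_mul_prod_eq_prod_of_image_box (fun i => (hRpos i).le)
      (fun i => (hSpos i).le) hL
    rwa [← hvol, mul_eq_right₀ (Finset.prod_pos fun i _ => hRpos i).ne'] at this
  obtain ⟨σ, hσ⟩ := L.exists_perm_apply_single_eq_of_image_box hRpos hSpos hL
  obtain ⟨i, hRi, hSi⟩ := σ.exists_sub_two_le_val_and_val_apply_lt (by omega)
  have hLi : ‖L (EuclideanSpace.single i 1)‖ = ε := by
    rw [hσ, norm_smul, PiLp.norm_single, hRs, hSs, if_neg hRi.not_gt, if_pos hSi]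
    simp [abs_of_pos hε0]
  obtain ⟨bv, rfl⟩ := hv.exists_orthonormalBasis_coe_eq (by simp)
  obtain ⟨bw, rfl⟩ := hw.exists_orthonormalBasis_coe_eq (by simp)
  have hs_first : s ⟨0, by omega⟩ ≤ ε := by
    simpa [hLi] using LinearMap.mul_norm_le_norm_apply_of_svd bv bw.orthonormal hs0 hsvd
      (fun j => hsmono (Nat.zero_le j)) (EuclideanSpace.single i 1)
  have hprod := (LinearMap.abs_det_eq_prod_of_svd bv bw hs0 hsvd).symm.trans hdet
  rw [← Fin.mul_prod_filter_one_le (by omega)] at hprod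
  rw [eq_inv_of_mul_eq_one_right hprod]
  exact inv_anti₀ ((hs0 _).lt_of_ne' (left_ne_zero_of_mul_eq_one hprod)) hs_first
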